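/- Let n and k be positive integers, let r be a vertex of the Kneser graph K(2n+k,n), and let x be a vertex with dist(r,x) < diam(K(2n+k,n)). Then x has a neighbor z in K(2n+k,n) with dist(r,z) = dist(r,x) + 1. -/

import Mathlib

/-- The Kneser graph `K(m, n)`: vertices are the `n`-element subsets of an `m`-element
ground set, with edges between disjoint sets. -/
def KneserGraph (m n : ℕ) : SimpleGraph {s : Finset (Fin m) // s.card = n} where
  Adj u v := Disjoint u.1 v.1 ∧ u ≠ v
  symm := ⟨fun u v ⟨h, hne⟩ => ⟨h.symm, hne.symm⟩⟩
  loopless := ⟨fun u ⟨_, h⟩ => h rfl⟩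

/-- The geodetic interval `I[u,v]`: all vertices lying on some shortest `u,v`-path. -/
def geodInterval {V : Type*} (G : SimpleGraph V) (u v : V) : Set V :=
  {w | G.dist u w + G.dist w v = G.dist u v}

/-- `I[W] = ⋃_{u,v ∈ W} I[u,v]`. -/
def geodIntervalSet {V : Type*} (G : SimpleGraph V) (W : Set V) : Set V :=
  ⋃ (u ∈ W) (v ∈ W), geodInterval G u v

/-- `W` is a geodetic set if `I[W] = V(G)`. -/
def IsGeodeticSet {V : Type*} (G : SimpleGraph V) (W : Set V) : Prop :=
  geodIntervalSet G W = Set.univ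

/-- `W` is geodetically convex if `I[W] = W`. -/
def IsGConvex {V : Type*} (G : SimpleGraph V) (W : Set V) : Prop :=
  geodIntervalSet G W = W

/-- The geodetic hull `H[W]`: the smallest g-convex set containing `W`. -/
def geodHull {V : Type*} (G : SimpleGraph V) (W : Set V) : Set V :=
  ⋂₀ {C | IsGConvex G C ∧ W ⊆ C}

/-- `W` is a geodetic hull set if `H[W] = V(G)`. -/
def IsGeodHullSet {V : Type*} (G : SimpleGraph V) (W : Set V) : Prop :=
  geodHull G W = Set.univ

/-- The geodetic number: minimum cardinality of a geodetic set. -/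
noncomputable def geodeticNumber {V : Type*} (G : SimpleGraph V) : ℕ :=
  sInf {m | ∃ W : Set V, IsGeodeticSet G W ∧ W.ncard = m}

/-- The geodetic hull number: minimum cardinality of a geodetic hull set. -/
noncomputable def geodHullNumber {V : Type*} (G : SimpleGraph V) : ℕ :=
  sInf {m | ∃ W : Set V, IsGeodHullSet G W ∧ W.ncard = m}

/-- The function `H(n,k)` from the paper. -/
def Hfun (n k : ℕ) : ℕ := if n % k ≤ 1 then n % k + k - 2 else n % k - 2

/-- `p = (⌈(n-1)/(2k)⌉ - 1)·k + 1`, computed in `ℤ`. -/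
def pInt (n k : ℕ) : ℤ := (⌈((n : ℚ) - 1) / (2 * k)⌉ - 1) * k + 1

/-!
Fix `r`. The distance from `r` to `v` depends only on `s = |r ∩ v|` and equals
`min (2⌈(n - s)/k⌉) (2⌈s/k⌉ + 1)` (Valencia-Pabon and Vera). If `u` and `v` are adjacent, their
intersection sizes `s`, `t` with `r` satisfy `n - k ≤ s + t ≤ n`, and conversely every such `t` is
attained by a neighbour of any vertex with intersection size `s`. Hence the formula changes by at
most one along edges and can always be decreased away from `r`, which identifies it with the
distance. It never exceeds `⌈(n - 1)/k⌉ + 1`, so neither does the diameter, and below that bound an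
explicit admissible `t` raises it by exactly one.
-/

namespace Nat

lemma le_mul_ceilDiv {k : ℕ} (hk : 0 < k) (m : ℕ) : m ≤ k * (m ⌈/⌉ k) :=
  (ceilDiv_le_iff_le_mul hk).1 le_rfl

lemma mul_ceilDiv_lt_add {k : ℕ} (hk : 0 < k) (m : ℕ) : k * (m ⌈/⌉ k) < m + k := by
  rw [ceilDiv_eq_add_pred_div]
  have := Nat.mul_div_le (m + k - 1) k
  omega

lemma lt_ceilDiv_iff_mul_lt {k m q : ℕ} (hk : 0 < k) : q < m ⌈/⌉ k ↔ k * q < m := by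
  rw [← not_le, ceilDiv_le_iff_le_mul hk, not_le]

end Nat

def kneserDist (n k s : ℕ) : ℕ := min (2 * ((n - s) ⌈/⌉ k)) (2 * (s ⌈/⌉ k) + 1)

def IsKneserStep (n k s t : ℕ) : Prop := s + t ≤ n ∧ n ≤ s + t + k

section
variable {n k s t : ℕ}

lemma IsKneserStep.symm (h : IsKneserStep n k s t) : IsKneserStep n k t s := by
  unfold IsKneserStep at *; omega

lemma kneserDist_self (n k : ℕ) : kneserDist n k n = 0 := by
  simp [kneserDist]

lemma kneserDist_eq_zero_iff (hk : 0 < k) (hs : s ≤ n) : kneserDist n k s = 0 ↔ s = n := by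
  refine ⟨fun h => ?_, fun h => h ▸ kneserDist_self n k⟩
  have : (n - s) ⌈/⌉ k = 0 := by unfold kneserDist at h; omega
  rw [← Nat.le_zero, ceilDiv_le_iff_le_mul hk] at this
  omega

lemma kneserDist_zero (hn : 0 < n) (hk : 0 < k) : kneserDist n k 0 = 1 := by
  have : 0 < n ⌈/⌉ k := (Nat.lt_ceilDiv_iff_mul_lt hk).2 (by simpa using hn)
  simp only [kneserDist, Nat.sub_zero, zero_ceilDiv]
  omega

lemma IsKneserStep.kneserDist_le_succ (hk : 0 < k) (h : IsKneserStep n k s t) :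
    kneserDist n k s ≤ kneserDist n k t + 1 := by
  obtain ⟨h₁, h₂⟩ := h
  have hs : s ⌈/⌉ k ≤ (n - t) ⌈/⌉ k := (gc_mul_ceilDiv hk).monotone_l (by omega)
  have hns : (n - s) ⌈/⌉ k ≤ t ⌈/⌉ k + 1 := by
    rw [ceilDiv_le_iff_le_mul hk, mul_add_one]
    have := Nat.le_mul_ceilDiv hk t
    omega
  unfold kneserDist
  omega

lemma exists_isKneserStep_kneserDist_lt (hk : 0 < k) (hpos : 0 < kneserDist n k s) :
    ∃ t, IsKneserStep n k s t ∧ kneserDist n k t < kneserDist n k s := by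
  have hsn : s < n := by
    have : 0 < (n - s) ⌈/⌉ k := by unfold kneserDist at hpos; omega
    rw [Nat.lt_ceilDiv_iff_mul_lt hk] at this
    omega
  rcases min_choice (2 * ((n - s) ⌈/⌉ k)) (2 * (s ⌈/⌉ k) + 1) with h | h
  · refine ⟨n - s - k, ⟨by omega, by omega⟩, ?_⟩
    have h₁ : (n - s - k) ⌈/⌉ k ≤ (n - s) ⌈/⌉ k - 1 := by
      rw [ceilDiv_le_iff_le_mul hk, Nat.mul_sub_one]
      have := Nat.le_mul_ceilDiv hk (n - s)
      omega
    have h₀ : 0 < (n - s) ⌈/⌉ k := (Nat.lt_ceilDiv_iff_mul_lt hk).2 (by omega)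
    have h₂ : kneserDist n k (n - s - k) ≤ 2 * ((n - s - k) ⌈/⌉ k) + 1 := min_le_right _ _
    change kneserDist n k s = _ at h
    omega
  · refine ⟨n - s, ⟨by omega, by omega⟩, ?_⟩
    have h₂ : kneserDist n k (n - s) ≤ 2 * ((n - (n - s)) ⌈/⌉ k) := min_le_left _ _
    rw [Nat.sub_sub_self hsn.le] at h₂
    change kneserDist n k s = _ at h
    omega

lemma kneserDist_le_ceilDiv_add_one (hk : 0 < k) :
    kneserDist n k s ≤ (n - 1) ⌈/⌉ k + 1 := by
  by_contra! hlt
  have hA := Nat.mul_ceilDiv_lt_add hk (n - s)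
  have hA₀ := Nat.lt_ceilDiv_iff_mul_lt hk (m := n - s) (q := 0)
  have hB := Nat.mul_ceilDiv_lt_add hk s
  have hc := Nat.le_mul_ceilDiv hk (n - 1)
  unfold kneserDist at hlt
  generalize (n - s) ⌈/⌉ k = A at *
  generalize s ⌈/⌉ k = B at *
  generalize (n - 1) ⌈/⌉ k = c at *
  have hAB : k * (c + 2) ≤ k * (A + B) := Nat.mul_le_mul_left k (by omega)
  rw [mul_add, mul_add] at hAB
  omega

lemma exists_isKneserStep_kneserDist_eq_succ (hn : 0 < n) (hk : 0 < k) (hs : s ≤ n)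
    (hlt : kneserDist n k s ≤ (n - 1) ⌈/⌉ k) :
    ∃ t, IsKneserStep n k s t ∧ kneserDist n k t = kneserDist n k s + 1 := by
  suffices ∃ t, IsKneserStep n k s t ∧ kneserDist n k s < kneserDist n k t by
    obtain ⟨t, hst, hgt⟩ := this
    exact ⟨t, hst, le_antisymm (hst.symm.kneserDist_le_succ hk) hgt⟩
  obtain rfl | hsn := hs.eq_or_lt
  · refine ⟨0, ⟨by omega, by omega⟩, ?_⟩
    rw [kneserDist_self, kneserDist_zero hn hk]
    omega
  have hc := Nat.mul_ceilDiv_lt_add hk (n - 1)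
  rcases min_choice (2 * ((n - s) ⌈/⌉ k)) (2 * (s ⌈/⌉ k) + 1) with h | h <;>
    change kneserDist n k s = _ at h <;> unfold kneserDist
  · have hA₀ : 0 < (n - s) ⌈/⌉ k := (Nat.lt_ceilDiv_iff_mul_lt hk).2 (by omega)
    have h2A : k * (2 * ((n - s) ⌈/⌉ k)) ≤ k * ((n - 1) ⌈/⌉ k) := Nat.mul_le_mul_left k (by omega)
    have hkA := Nat.le_mul_of_pos_right k hA₀
    have hA₁ := Nat.le_mul_ceilDiv hk (n - s)
    have hA₂ := Nat.mul_ceilDiv_lt_add hk (n - s)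
    rw [mul_left_comm] at h2A
    generalize (n - s) ⌈/⌉ k = A at *
    refine ⟨k * A - k + 1, ⟨by omega, by omega⟩, ?_⟩
    have h₁ : A < (n - (k * A - k + 1)) ⌈/⌉ k := (Nat.lt_ceilDiv_iff_mul_lt hk).2 (by omega)
    have h₂ : A - 1 < (k * A - k + 1) ⌈/⌉ k :=
      (Nat.lt_ceilDiv_iff_mul_lt hk).2 (by rw [Nat.mul_sub_one]; omega)
    omega
  · have h2B : k * (2 * (s ⌈/⌉ k) + 1) ≤ k * ((n - 1) ⌈/⌉ k) := Nat.mul_le_mul_left k (by omega)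
    have hB₁ := Nat.le_mul_ceilDiv hk s
    have hB₂ := Nat.mul_ceilDiv_lt_add hk s
    rw [mul_add_one, mul_left_comm] at h2B
    generalize s ⌈/⌉ k = B at *
    refine ⟨n - k * B - 1, ⟨by omega, by omega⟩, ?_⟩
    have h₁ : B < (n - (n - k * B - 1)) ⌈/⌉ k := (Nat.lt_ceilDiv_iff_mul_lt hk).2 (by omega)
    have h₂ : B < (n - k * B - 1) ⌈/⌉ k := (Nat.lt_ceilDiv_iff_mul_lt hk).2 (by omega)
    omega

end

namespace SimpleGraph

variable {V : Type*} {G : SimpleGraph V} {r : V} {f : V → ℕ}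

lemma le_length_of_forall_adj_le_succ (hr : f r = 0) (hf : ∀ u w, G.Adj u w → f u ≤ f w + 1)
    {v : V} (p : G.Walk v r) : f v ≤ p.length := by
  induction p with
  | nil => simp [hr]
  | cons h _ ih =>
    have := hf _ _ h
    rw [Walk.length_cons]
    omega

lemma exists_walk_length_le_of_forall_exists_adj_lt
    (hf : ∀ v, v ≠ r → ∃ w, G.Adj v w ∧ f w < f v) (v : V) :
    ∃ p : G.Walk v r, p.length ≤ f v := by
  by_cases hv : v = r
  · subst hv
    exact ⟨.nil, Nat.zero_le _⟩
  obtain ⟨w, hvw, hw⟩ := hf v hv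
  obtain ⟨p, hp⟩ := exists_walk_length_le_of_forall_exists_adj_lt hf w
  exact ⟨.cons hvw p, by rw [Walk.length_cons]; omega⟩
termination_by f v

lemma dist_eq_of_forall_adj_le_succ_of_exists_adj_lt (hr : f r = 0)
    (hlip : ∀ u w, G.Adj u w → f u ≤ f w + 1)
    (hdesc : ∀ v, v ≠ r → ∃ w, G.Adj v w ∧ f w < f v) (v : V) : G.dist r v = f v := by
  rw [dist_comm]
  obtain ⟨p, hp⟩ := exists_walk_length_le_of_forall_exists_adj_lt hdesc v
  obtain ⟨q, hq⟩ := p.reachable.exists_walk_length_eq_dist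
  exact le_antisymm ((dist_le p).trans hp) (hq ▸ le_length_of_forall_adj_le_succ hr hlip q)

end SimpleGraph

open Finset

namespace KneserGraph

variable {n k : ℕ}

lemma card_inter_le (r v : {s : Finset (Fin (2 * n + k)) // s.card = n}) :
    #(r.1 ∩ v.1) ≤ n :=
  (card_le_card inter_subset_left).trans_eq r.2

lemma eq_of_card_inter_eq {r v : {s : Finset (Fin (2 * n + k)) // s.card = n}}
    (h : #(r.1 ∩ v.1) = n) : r = v := by
  have hrv : r.1 ⊆ v.1 := inter_eq_left.1 <|
    eq_of_subset_of_card_le inter_subset_left (by rw [h, r.2])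
  exact Subtype.ext <| eq_of_subset_of_card_le hrv (by rw [r.2, v.2])

lemma isKneserStep_of_adj (r : {s : Finset (Fin (2 * n + k)) // s.card = n})
    {u v : {s : Finset (Fin (2 * n + k)) // s.card = n}} (h : (KneserGraph (2 * n + k) n).Adj u v) :
    IsKneserStep n k #(r.1 ∩ u.1) #(r.1 ∩ v.1) := by
  have huv : Disjoint u.1 v.1 := h.1
  have hsum : #(r.1 ∩ u.1) + #(r.1 ∩ v.1) = #(r.1 ∩ (u.1 ∪ v.1)) := by
    rw [inter_union_distrib_left,
      card_union_of_disjoint (huv.mono inter_subset_right inter_subset_right)]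
  have hcompl : #(u.1 ∪ v.1)ᶜ = k := by
    rw [card_compl, card_union_of_disjoint huv, u.2, v.2, Fintype.card_fin]
    omega
  have hout : #(r.1 \ (u.1 ∪ v.1)) ≤ #(u.1 ∪ v.1)ᶜ :=
    card_le_card fun x hx => mem_compl.2 (mem_sdiff.1 hx).2
  have hin : #(r.1 ∩ (u.1 ∪ v.1)) ≤ n := (card_le_card inter_subset_left).trans_eq r.2
  have := card_inter_add_card_sdiff r.1 (u.1 ∪ v.1)
  constructor <;> omega

lemma exists_adj_card_inter_eq (hn : 0 < n) {r v : {s : Finset (Fin (2 * n + k)) // s.card = n}}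
    {t : ℕ} (h : IsKneserStep n k #(r.1 ∩ v.1) t) :
    ∃ z, (KneserGraph (2 * n + k) n).Adj v z ∧ #(r.1 ∩ z.1) = t := by
  obtain ⟨h₁, h₂⟩ := h
  have hrv := card_sdiff_add_card_inter r.1 v.1
  have hunion := card_union_add_card_inter r.1 v.1
  have hout : #(r.1 ∪ v.1)ᶜ = 2 * n + k - #(r.1 ∪ v.1) := by
    rw [card_compl, Fintype.card_fin]
  obtain ⟨u₁, hu₁, hu₁card⟩ := exists_subset_card_eq (show t ≤ #(r.1 \ v.1) by omega)
  obtain ⟨u₂, hu₂, hu₂card⟩ := exists_subset_card_eq (show n - t ≤ #(r.1 ∪ v.1)ᶜ by omega)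
  have hu₁r : u₁ ⊆ r.1 := hu₁.trans sdiff_subset
  have hu₂r : Disjoint r.1 u₂ := disjoint_compl_right.mono subset_union_left hu₂
  have hu₁₂ : Disjoint u₁ u₂ := hu₂r.mono_left hu₁r
  have hvz : Disjoint v.1 (u₁ ∪ u₂) := disjoint_union_right.2
    ⟨disjoint_sdiff.mono_right hu₁, disjoint_compl_right.mono subset_union_right hu₂⟩
  refine ⟨⟨u₁ ∪ u₂, by rw [card_union_of_disjoint hu₁₂]; omega⟩, ⟨hvz, fun hvz' => ?_⟩, ?_⟩
  · rw [show u₁ ∪ u₂ = v.1 from congrArg Subtype.val hvz'.symm, disjoint_self_iff_empty,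
      ← card_eq_zero, v.2] at hvz
    omega
  · rw [inter_union_distrib_left, inter_eq_right.2 hu₁r, disjoint_iff_inter_eq_empty.1 hu₂r,
      union_empty, hu₁card]

theorem dist_eq_kneserDist (hn : 0 < n) (hk : 0 < k)
    (r v : {s : Finset (Fin (2 * n + k)) // s.card = n}) :
    (KneserGraph (2 * n + k) n).dist r v = kneserDist n k #(r.1 ∩ v.1) := by
  refine SimpleGraph.dist_eq_of_forall_adj_le_succ_of_exists_adj_lt
    (G := KneserGraph (2 * n + k) n) (r := r) (f := fun v => kneserDist n k #(r.1 ∩ v.1))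
    ?_ ?_ ?_ v
  · simp only [inter_self, r.2, kneserDist_self]
  · exact fun u w h => (isKneserStep_of_adj r h).kneserDist_le_succ hk
  · intro v hv
    have hpos : 0 < kneserDist n k #(r.1 ∩ v.1) := Nat.pos_of_ne_zero fun h =>
      hv (eq_of_card_inter_eq ((kneserDist_eq_zero_iff hk (card_inter_le r v)).1 h)).symm
    obtain ⟨t, hst, ht⟩ := exists_isKneserStep_kneserDist_lt hk hpos
    obtain ⟨z, hvz, hz⟩ := exists_adj_card_inter_eq hn hst
    exact ⟨z, hvz, hz ▸ ht⟩

end KneserGraph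

theorem exists_neighbor_farther_from_root
    (n k : ℕ) (hn : 0 < n) (hk : 0 < k)
    (r x : {s : Finset (Fin (2 * n + k)) // s.card = n})
    (h : (KneserGraph (2 * n + k) n).dist r x < (KneserGraph (2 * n + k) n).diam) :
    ∃ z : {s : Finset (Fin (2 * n + k)) // s.card = n}, (KneserGraph (2 * n + k) n).Adj x z ∧
      (KneserGraph (2 * n + k) n).dist r z = (KneserGraph (2 * n + k) n).dist r x + 1 := by
  have : Nonempty {s : Finset (Fin (2 * n + k)) // s.card = n} := ⟨r⟩
  obtain ⟨u, v, huv⟩ := (KneserGraph (2 * n + k) n).exists_dist_eq_diam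
  have hdiam := kneserDist_le_ceilDiv_add_one (n := n) (s := #(u.1 ∩ v.1)) hk
  rw [KneserGraph.dist_eq_kneserDist hn hk] at h huv
  obtain ⟨t, hst, ht⟩ :=
    exists_isKneserStep_kneserDist_eq_succ hn hk (KneserGraph.card_inter_le r x) (by omega)
  obtain ⟨z, hxz, hz⟩ := KneserGraph.exists_adj_card_inter_eq hn hst
  refine ⟨z, hxz, ?_⟩
  rw [KneserGraph.dist_eq_kneserDist hn hk, KneserGraph.dist_eq_kneserDist hn hk, hz, ht]
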